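/- arXiv:2210.09299 — 4 statements merged into one kernel-verified Lean document; each statement's English description precedes it below -/
import Mathlib

section
/- For every real number α: α is badly approximable if and only if the forward diagonal orbit g_{ℝ>0}Λ_α = {g_tΛ_α : t > 0} is precompact in X. -/
open Matrix
noncomputable section

/-- `SL₂(ℝ)`. -/
abbrev SL2R := Matrix.SpecialLinearGroup (Fin 2) ℝ

/-- `SL₂(ℝ)` carries the topology induced from the space of matrices. -/
instance : TopologicalSpace SL2R :=
  TopologicalSpace.induced (fun g : SL2R => (g : Matrix (Fin 2) (Fin 2) ℝ)) inferInstance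

/-- The subgroup `SL₂(ℤ)` of `SL₂(ℝ)`. -/
def Gamma : Subgroup SL2R :=
  (Matrix.SpecialLinearGroup.map (n := Fin 2) (Int.castRingHom ℝ)).range

/-- `X = SL₂(ℝ)/SL₂(ℤ)`, the space of unimodular lattices in `ℝ²`,
with the quotient topology. -/
abbrev XSpace := SL2R ⧸ Gamma

/-- The diagonal matrix `g_t = [[eᵗ, 0], [0, e⁻ᵗ]]`. -/
def gDiag (t : ℝ) : SL2R :=
  ⟨!![Real.exp t, 0; 0, Real.exp (-t)], by
    simp [Matrix.det_fin_two_of, ← Real.exp_add]⟩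

/-- The upper unipotent matrix `u_x = [[1, x], [0, 1]]`. -/
def uMat (x : ℝ) : SL2R :=
  ⟨!![1, x; 0, 1], by simp [Matrix.det_fin_two_of]⟩

/-- The lower unipotent matrix `v_y = [[1, 0], [y, 1]]`. -/
def vMat (y : ℝ) : SL2R :=
  ⟨!![1, 0; y, 1], by simp [Matrix.det_fin_two_of]⟩

/-- The lattice `Λ_α = u_α ℤ²` as a point of `X`. -/
def LatX (α : ℝ) : XSpace := QuotientGroup.mk (uMat α)

/-- The full diagonal orbit `g_ℝ x = {g_t x : t ∈ ℝ}`. -/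
def fullOrbit (x : XSpace) : Set XSpace := {y | ∃ t : ℝ, y = gDiag t • x}

/-- The forward diagonal orbit `g_{ℝ>0} x = {g_t x : t > 0}`. -/
def fwdOrbit (x : XSpace) : Set XSpace := {y | ∃ t : ℝ, 0 < t ∧ y = gDiag t • x}

/-- The backward diagonal orbit `g_{ℝ<0} x = {g_t x : t < 0}`. -/
def bwdOrbit (x : XSpace) : Set XSpace := {y | ∃ t : ℝ, t < 0 ∧ y = gDiag t • x}

/-- A real number `α` is badly approximable if
`inf {q·|qα − p| : p ∈ ℤ, q ∈ ℤ, q ≥ 1} > 0`. -/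
def BadlyApproximable (α : ℝ) : Prop :=
  ∃ ε > (0 : ℝ), ∀ p q : ℤ, 1 ≤ q → ε ≤ (q : ℝ) * |(q : ℝ) * α - (p : ℝ)|


/-!
Let `λ₁(Λ)` be the sup-norm length of a shortest nonzero vector of a lattice `Λ`. It is a
continuous positive function on `X`, and its superlevel sets `{λ₁ ≥ ε}` are compact (Mahler's
criterion). We get Mahler's criterion from the modular group: after a change of basis by
`SL₂(ℤ)`, the point `g⁻¹ • i` of the upper half plane lies in the standard fundamental domain, its
imaginary part is at most `λ₁(gℤ²)⁻²`, and `SL₂(ℝ)` acts properly on the upper half plane.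
Hence the forward orbit of `Λ_α` is precompact iff `λ₁` is bounded below along it.

`g_t` sends the vector `(p + qα, q)` of `Λ_α` to `(eᵗ(p + qα), e⁻ᵗq)`, and the product of the
two coordinates does not depend on `t`. So `|q| |p + qα| ≥ ε` for all `q ≠ 0` gives
`λ₁ ≥ min 1 √ε` along the orbit. Conversely, if `λ₁ ≥ c` along the orbit, take `eᵗ = 2q/c`: the
second coordinate of `(qα - p, q)` becomes `c/2`, so the first is at least `c`, that is
`q |qα - p| ≥ c²/2`.
-/

attribute [local instance] Matrix.linftyOpNormedAddCommGroup Matrix.linftyOpNormedRing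

namespace Matrix

variable {l m n : Type*} [Fintype l] [Fintype m] [Fintype n]

/-- `λ₁` of the lattice `A ℤⁿ`; the norm on `m → ℝ` is the sup norm. -/
def minNorm (A : Matrix m n ℝ) : ℝ :=
  ⨅ v : {v : n → ℤ // v ≠ 0}, ‖A *ᵥ fun i => (v.1 i : ℝ)‖

lemma bddBelow_range_norm_mulVec (A : Matrix m n ℝ) :
    BddBelow (Set.range fun v : {v : n → ℤ // v ≠ 0} => ‖A *ᵥ fun i => (v.1 i : ℝ)‖) :=
  ⟨0, by rintro _ ⟨v, rfl⟩; exact norm_nonneg _⟩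

lemma minNorm_le (A : Matrix m n ℝ) {v : n → ℤ} (hv : v ≠ 0) :
    minNorm A ≤ ‖A *ᵥ fun i => (v i : ℝ)‖ :=
  ciInf_le (bddBelow_range_norm_mulVec A) ⟨v, hv⟩

lemma le_minNorm [Nonempty n] {A : Matrix m n ℝ} {c : ℝ}
    (h : ∀ v : n → ℤ, v ≠ 0 → c ≤ ‖A *ᵥ fun i => (v i : ℝ)‖) : c ≤ minNorm A :=
  have : Nonempty {v : n → ℤ // v ≠ 0} := nonempty_subtype.2 (exists_ne 0)
  le_ciInf fun v => h v.1 v.2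

lemma minNorm_nonneg (A : Matrix m n ℝ) : 0 ≤ minNorm A :=
  Real.iInf_nonneg fun _ => norm_nonneg _

lemma minNorm_mul_le (B : Matrix l m ℝ) (A : Matrix m n ℝ) :
    minNorm (B * A) ≤ ‖B‖ * minNorm A := by
  rw [minNorm, minNorm, Real.mul_iInf_of_nonneg (norm_nonneg B)]
  refine ciInf_mono (bddBelow_range_norm_mulVec _) fun v => ?_
  rw [← mulVec_mulVec]
  exact linfty_opNorm_mulVec _ _

lemma one_le_minNorm_one [DecidableEq n] [Nonempty n] : 1 ≤ minNorm (1 : Matrix n n ℝ) := by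
  refine le_minNorm fun v hv => ?_
  obtain ⟨i, hi⟩ := Function.ne_iff.1 hv
  calc (1 : ℝ) ≤ |(v i : ℝ)| := by exact_mod_cast Int.one_le_abs hi
    _ ≤ ‖(1 : Matrix n n ℝ) *ᵥ fun i => (v i : ℝ)‖ := by
      rw [one_mulVec, ← Real.norm_eq_abs]
      exact norm_le_pi_norm (fun i => (v i : ℝ)) i

lemma minNorm_le_minNorm_mul_intCast [DecidableEq n] [Nonempty n] (A : Matrix m n ℝ)
    (γ : SpecialLinearGroup n ℤ) :
    minNorm A ≤ minNorm (A * (SpecialLinearGroup.map (Int.castRingHom ℝ) γ : Matrix n n ℝ)) := by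
  refine le_minNorm fun v hv => ?_
  have hγv : (γ : Matrix n n ℤ) *ᵥ v ≠ 0 := by
    rwa [Ne, ← mulVec_zero (γ : Matrix n n ℤ),
      (mulVec_injective_of_isUnit (isUnit_iff_isUnit_det _ |>.2 (by simp))).eq_iff]
  calc minNorm A ≤ ‖A *ᵥ fun i => (((γ : Matrix n n ℤ) *ᵥ v) i : ℝ)‖ := minNorm_le A hγv
    _ = _ := by
      rw [← mulVec_mulVec]
      congr 2
      ext i
      exact RingHom.map_mulVec (Int.castRingHom ℝ) _ v i

lemma minNorm_mul_intCast [DecidableEq n] [Nonempty n] (A : Matrix m n ℝ)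
    (γ : SpecialLinearGroup n ℤ) :
    minNorm (A * (SpecialLinearGroup.map (Int.castRingHom ℝ) γ : Matrix n n ℝ)) = minNorm A := by
  refine le_antisymm ?_ (minNorm_le_minNorm_mul_intCast A γ)
  have h := minNorm_le_minNorm_mul_intCast
    (A * (SpecialLinearGroup.map (Int.castRingHom ℝ) γ : Matrix n n ℝ)) γ⁻¹
  rwa [Matrix.mul_assoc, ← SpecialLinearGroup.coe_mul, ← map_mul, mul_inv_cancel, map_one,
    SpecialLinearGroup.coe_one, Matrix.mul_one] at h

end Matrix

namespace Matrix.SpecialLinearGroup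

open Filter Topology

variable {n : Type*} [Fintype n] [DecidableEq n]

lemma minNorm_le_norm_mul_inv_mul (g h : SpecialLinearGroup n ℝ) :
    minNorm (g : Matrix n n ℝ) ≤ ‖((g * h⁻¹ : SpecialLinearGroup n ℝ) : Matrix n n ℝ)‖ *
      minNorm (h : Matrix n n ℝ) := by
  calc minNorm (g : Matrix n n ℝ)
      = minNorm (((g * h⁻¹ * h : SpecialLinearGroup n ℝ)) : Matrix n n ℝ) := by
        rw [inv_mul_cancel_right]
    _ ≤ _ := minNorm_mul_le _ _

variable [Nonempty n]

lemma minNorm_pos (g : SpecialLinearGroup n ℝ) : 0 < minNorm (g : Matrix n n ℝ) :=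
  pos_of_mul_pos_right
    (one_pos.trans_le (one_le_minNorm_one.trans (minNorm_le_norm_mul_inv_mul 1 g)))
    (norm_nonneg _)

lemma continuous_minNorm :
    Continuous fun g : SpecialLinearGroup n ℝ => minNorm (g : Matrix n n ℝ) := by
  refine continuous_iff_continuousAt.2 fun g₀ => ?_
  have hnorm : ∀ f : SpecialLinearGroup n ℝ → SpecialLinearGroup n ℝ, Continuous f →
      f g₀ = 1 → Tendsto (fun g => ‖(f g : Matrix n n ℝ)‖) (𝓝 g₀) (𝓝 1) := fun f hf h1 =>
    (by fun_prop : Continuous fun g => ‖(f g : Matrix n n ℝ)‖).tendsto' g₀ 1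
      (by rw [h1, coe_one, norm_one])
  have hupper := (hnorm (· * g₀⁻¹) (by fun_prop) (mul_inv_cancel g₀)).mul_const
    (minNorm (g₀ : Matrix n n ℝ))
  have hlower := ((hnorm (g₀ * ·⁻¹) (by fun_prop) (mul_inv_cancel g₀)).inv₀ one_ne_zero).const_mul
    (minNorm (g₀ : Matrix n n ℝ))
  rw [one_mul] at hupper
  rw [inv_one, mul_one] at hlower
  refine tendsto_of_tendsto_of_tendsto_of_le_of_le hlower hupper (fun g => ?_)
    (fun g => minNorm_le_norm_mul_inv_mul g g₀)
  rw [← div_eq_mul_inv]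
  exact div_le_of_le_mul₀ (norm_nonneg _) (minNorm_nonneg _)
    ((minNorm_le_norm_mul_inv_mul g₀ g).trans_eq (mul_comm _ _))

end Matrix.SpecialLinearGroup

lemma minNorm_mul_of_mem_Gamma (g : SL2R) {δ : SL2R} (hδ : δ ∈ Gamma) :
    minNorm ((g * δ : SL2R) : Matrix (Fin 2) (Fin 2) ℝ) =
      minNorm (g : Matrix (Fin 2) (Fin 2) ℝ) := by
  obtain ⟨γ, rfl⟩ := hδ
  exact minNorm_mul_intCast _ γ

def minNormX (x : XSpace) : ℝ :=
  Quotient.liftOn' x (fun g : SL2R => minNorm (g : Matrix (Fin 2) (Fin 2) ℝ)) fun a b hab => by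
    rw [← mul_inv_cancel_left a b]
    exact (minNorm_mul_of_mem_Gamma a (QuotientGroup.leftRel_apply.1 hab)).symm

lemma minNormX_pos (x : XSpace) : 0 < minNormX x := by
  obtain ⟨g, rfl⟩ := QuotientGroup.mk_surjective x
  exact SpecialLinearGroup.minNorm_pos g

lemma continuous_minNormX : Continuous minNormX :=
  SpecialLinearGroup.continuous_minNorm.quotient_liftOn' _

open UpperHalfPlane ModularGroup
open scoped Modular

-- `SL2R` carries Mathlib's topology on `SpecialLinearGroup` under another name.
instance : IsTopologicalGroup SL2R := SpecialLinearGroup.topologicalGroup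

instance : ProperSMul SL2R ℍ := UpperHalfPlane.instProperSMul

lemma im_inv_smul_I (g : SL2R) :
    (g⁻¹ • I).im =
      1 / ((g : Matrix (Fin 2) (Fin 2) ℝ) 0 0 ^ 2 + (g : Matrix (Fin 2) (Fin 2) ℝ) 1 0 ^ 2) := by
  rw [MulAction.compHom_smul_def, UpperHalfPlane.im_smul_eq_div_normSq]
  simp [denom, Complex.normSq_apply, Matrix.inv_def, g.2, adjugate_fin_two, sq]

lemma im_inv_smul_I_le (g : SL2R) :
    (g⁻¹ • I).im ≤ 1 / minNorm (g : Matrix (Fin 2) (Fin 2) ℝ) ^ 2 := by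
  set a := (g : Matrix (Fin 2) (Fin 2) ℝ) 0 0
  set c := (g : Matrix (Fin 2) (Fin 2) ℝ) 1 0
  have hcol : minNorm (g : Matrix (Fin 2) (Fin 2) ℝ) ≤ √(a ^ 2 + c ^ 2) := by
    have he : (Pi.single 0 1 : Fin 2 → ℤ) ≠ 0 := by simp
    refine (minNorm_le _ he).trans ?_
    refine pi_norm_le_iff_of_nonneg (Real.sqrt_nonneg _) |>.2 fun i => ?_
    fin_cases i
    · simpa [mulVec_single_one] using Real.abs_le_sqrt (le_add_of_nonneg_right (sq_nonneg c))
    · simpa [mulVec_single_one] using Real.abs_le_sqrt (le_add_of_nonneg_left (sq_nonneg a))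
  rw [im_inv_smul_I]
  have hpos := SpecialLinearGroup.minNorm_pos g
  gcongr
  exact (Real.le_sqrt hpos.le (by positivity)).1 hcol

lemma map_intCastRingHom_smul (γ : SpecialLinearGroup (Fin 2) ℤ) (z : ℍ) :
    (SpecialLinearGroup.map (Int.castRingHom ℝ) γ : SL2R) • z = γ • z := by
  ext1
  rw [coe_specialLinearGroup_apply, coe_specialLinearGroup_apply]
  simp

lemma exists_mem_Gamma_inv_smul_I_mem_fd (g : SL2R) : ∃ δ ∈ Gamma, (g * δ)⁻¹ • I ∈ 𝒟 := by
  obtain ⟨γ, hγ⟩ := exists_smul_mem_fd (g⁻¹ • I)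
  refine ⟨SpecialLinearGroup.map (Int.castRingHom ℝ) γ⁻¹, ⟨γ⁻¹, rfl⟩, ?_⟩
  rwa [_root_.mul_inv_rev, ← map_inv, inv_inv, mul_smul, map_intCastRingHom_smul]

lemma isCompact_setOf_inv_smul_I_mem {K : Set ℍ} (hK : IsCompact K) :
    IsCompact {g : SL2R | g⁻¹ • I ∈ K} := by
  have hpair := ProperSMul.isProperMap_smul_pair (G := SL2R) (X := ℍ)
  have h := (hpair.isCompact_preimage (hK.prod (isCompact_singleton (x := I)))).image
    continuous_fst
  have : Prod.fst '' ((fun gx : SL2R × ℍ => (gx.1 • gx.2, gx.2)) ⁻¹' K ×ˢ {I}) =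
      {g : SL2R | g • I ∈ K} := by
    ext g
    simp
  rw [this] at h
  exact h.inv

lemma isCompact_setOf_le_minNormX {ε : ℝ} (hε : 0 < ε) :
    IsCompact {x : XSpace | ε ≤ minNormX x} := by
  have hK := isCompact_setOf_inv_smul_I_mem (isCompact_truncatedFundamentalDomain (1 / ε ^ 2))
  refine (hK.image continuous_quot_mk).of_isClosed_subset
    (isClosed_le continuous_const continuous_minNormX) ?_
  rintro x hx
  obtain ⟨g, rfl⟩ := QuotientGroup.mk_surjective x
  obtain ⟨δ, hδ, hfd⟩ := exists_mem_Gamma_inv_smul_I_mem_fd g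
  have hε' : ε ≤ minNorm ((g * δ : SL2R) : Matrix (Fin 2) (Fin 2) ℝ) := by
    rwa [minNorm_mul_of_mem_Gamma g hδ]
  refine ⟨g * δ, ⟨hfd, (im_inv_smul_I_le _).trans ?_⟩, (QuotientGroup.mk_mul_of_mem g hδ)⟩
  gcongr

lemma gDiag_mul_uMat_mulVec (t α : ℝ) (v : Fin 2 → ℝ) :
    ((gDiag t * uMat α : SL2R) : Matrix (Fin 2) (Fin 2) ℝ) *ᵥ v =
      ![Real.exp t * (v 0 + α * v 1), Real.exp (-t) * v 1] := by
  change ((gDiag t : Matrix (Fin 2) (Fin 2) ℝ) * (uMat α : Matrix (Fin 2) (Fin 2) ℝ)) *ᵥ v = _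
  rw [← mulVec_mulVec]
  ext i
  fin_cases i <;> simp [gDiag, uMat, mulVec, dotProduct, Fin.sum_univ_two]

lemma BadlyApproximable.exists_pos_le_abs_mul_abs {α : ℝ} (h : BadlyApproximable α) :
    ∃ ε > 0, ∀ p q : ℤ, q ≠ 0 → ε ≤ |(q : ℝ)| * |p + α * q| := by
  obtain ⟨ε, hε, hle⟩ := h
  refine ⟨ε, hε, fun p q hq => ?_⟩
  rcases hq.lt_or_gt with hneg | hpos
  · have := hle p (-q) (by omega)
    rw [abs_of_neg (by exact_mod_cast hneg : (q : ℝ) < 0), ← abs_neg]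
    push_cast at this
    convert this using 3
    ring
  · have := hle (-p) q hpos
    rw [abs_of_pos (by exact_mod_cast hpos : (0 : ℝ) < q)]
    push_cast at this
    convert this using 3
    ring

lemma min_one_sqrt_le_minNorm_gDiag_mul_uMat {α ε : ℝ}
    (hε : ∀ p q : ℤ, q ≠ 0 → ε ≤ |(q : ℝ)| * |p + α * q|) {t : ℝ} (ht : 0 ≤ t) :
    min 1 √ε ≤ minNorm ((gDiag t * uMat α : SL2R) : Matrix (Fin 2) (Fin 2) ℝ) := by
  refine le_minNorm fun v hv => ?_
  rw [gDiag_mul_uMat_mulVec]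
  set x : Fin 2 → ℝ := ![Real.exp t * (v 0 + α * v 1), Real.exp (-t) * v 1] with hx
  have hx0 : |x 0| ≤ ‖x‖ := norm_le_pi_norm x 0
  have hx1 : |x 1| ≤ ‖x‖ := norm_le_pi_norm x 1
  rcases eq_or_ne (v 1) 0 with hv1 | hv1
  · have hv0 : v 0 ≠ 0 := fun hv0 => hv (by ext i; fin_cases i <;> assumption)
    refine (min_le_left _ _).trans (le_trans ?_ hx0)
    simp only [hx, Matrix.cons_val_zero, hv1, Int.cast_zero, mul_zero, add_zero, abs_mul,
      Real.abs_exp]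
    exact one_le_mul_of_one_le_of_one_le (Real.one_le_exp ht)
      (by exact_mod_cast Int.one_le_abs hv0)
  · refine (min_le_right _ _).trans ((Real.sqrt_le_left (norm_nonneg _)).2 ?_)
    calc ε ≤ |(v 1 : ℝ)| * |v 0 + α * v 1| := hε _ _ hv1
      _ = |x 0| * |x 1| := by
        simp only [hx, Matrix.cons_val_zero, Matrix.cons_val_one, abs_mul, Real.abs_exp]
        rw [Real.exp_neg]
        field_simp
      _ ≤ ‖x‖ ^ 2 := by rw [sq]; exact mul_le_mul hx0 hx1 (abs_nonneg _) (norm_nonneg _)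

lemma BadlyApproximable.of_le_minNorm_gDiag_mul_uMat {α c : ℝ} (hc : 0 < c) (hc1 : c ≤ 1)
    (h : ∀ t > 0, c ≤ minNorm ((gDiag t * uMat α : SL2R) : Matrix (Fin 2) (Fin 2) ℝ)) :
    BadlyApproximable α := by
  refine ⟨c ^ 2 / 2, by positivity, fun p q hq => ?_⟩
  have hq' : (1 : ℝ) ≤ q := by exact_mod_cast hq
  set s := 2 * q / c with hs
  have hs1 : 1 < s := by rw [hs, lt_div_iff₀ hc]; linarith
  have hv : (![-p, q] : Fin 2 → ℤ) ≠ 0 := fun h0 => by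
    have := congrFun h0 1
    simp at this
    omega
  have hmin := (h (Real.log s) (Real.log_pos hs1)).trans (minNorm_le _ hv)
  rw [gDiag_mul_uMat_mulVec, Real.exp_neg, Real.exp_log (by positivity)] at hmin
  simp only [Matrix.cons_val_zero, Matrix.cons_val_one, Int.cast_neg] at hmin
  rw [show -(p : ℝ) + α * q = q * α - p by ring] at hmin
  have hfirst : c ≤ s * |q * α - p| := by
    by_contra hlt
    refine hmin.not_gt ((pi_norm_lt_iff hc).2 (Fin.forall_fin_two.2 ⟨?_, ?_⟩))
    · simpa [abs_mul, abs_of_pos (by positivity : 0 < s)] using hlt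
    · simp only [Matrix.cons_val_one, Matrix.cons_val_zero, Real.norm_eq_abs]
      rw [abs_of_pos (by positivity), hs]
      field_simp
      linarith
  rw [hs, div_mul_eq_mul_div, le_div_iff₀ hc] at hfirst
  linarith

/-- `α` is badly approximable if and only if the forward diagonal orbit of `Λ_α` is
precompact in `X`. -/
theorem stmt7 (α : ℝ) :
    BadlyApproximable α ↔ IsCompact (closure (fwdOrbit (LatX α))) := by
  constructor
  · intro hα
    obtain ⟨ε, hε, hε_le⟩ := hα.exists_pos_le_abs_mul_abs
    refine (isCompact_setOf_le_minNormX (lt_min one_pos (Real.sqrt_pos.2 hε))).of_isClosed_subset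
      isClosed_closure (closure_minimal ?_ (isClosed_le continuous_const continuous_minNormX))
    rintro _ ⟨t, ht, rfl⟩
    exact min_one_sqrt_le_minNorm_gDiag_mul_uMat hε_le ht.le
  · intro hK
    obtain ⟨x₀, -, hx₀⟩ := hK.exists_isMinOn ⟨_, subset_closure ⟨1, one_pos, rfl⟩⟩
      continuous_minNormX.continuousOn
    refine .of_le_minNorm_gDiag_mul_uMat (lt_min (minNormX_pos x₀) one_pos) (min_le_right _ _)
      fun t ht => (min_le_left _ _).trans (hx₀ (subset_closure ⟨t, ht, rfl⟩))
end
end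

section
/- Let ν be a norm on ℝ². For every real number α: α is ν-Dirichlet improvable if and only if there exist t₀ > 0 and an open set U ⊆ X containing the critical locus L_ν such that g_tΛ_α ∉ U for all t > t₀. -/
open Matrix
noncomputable section

/-- `ν` is a norm on `ℝ²`. -/
def IsNorm (ν : (Fin 2 → ℝ) → ℝ) : Prop :=
  (∀ v, ν v = 0 ↔ v = 0) ∧ (∀ (a : ℝ) (v), ν (a • v) = |a| * ν v) ∧
    (∀ v w, ν (v + w) ≤ ν v + ν w)

/-- The set of points of the unimodular lattice `g ℤ²` in `ℝ²`. -/
def latticePts (g : SL2R) : Set (Fin 2 → ℝ) :=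
  {v | ∃ m : Fin 2 → ℤ, v = (g : Matrix (Fin 2) (Fin 2) ℝ).mulVec (fun i => (m i : ℝ))}

/-- The critical radius `r_ν`: the supremum of `r > 0` for which some unimodular
lattice meets the open ball `B_ν(r)` only at the origin. -/
def criticalRadius (ν : (Fin 2 → ℝ) → ℝ) : ℝ :=
  sSup {r : ℝ | 0 < r ∧ ∃ g : SL2R, ∀ v ∈ latticePts g, ν v < r → v = 0}

/-- `α` is `ν`-Dirichlet improvable: there are `c ∈ (0,1)` and `T₀ > 1` such that for
every `T ≥ T₀` the lattice `Λ_α` meets `diag(cT⁻¹, T) B_ν(r_ν)` nontrivially, i.e. there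
is a nonzero `(p,q) ∈ ℤ²` with `ν(c⁻¹T(p + αq), T⁻¹q) < r_ν`. -/
def DirichletImprovable (ν : (Fin 2 → ℝ) → ℝ) (α : ℝ) : Prop :=
  ∃ c : ℝ, 0 < c ∧ c < 1 ∧ ∃ T₀ : ℝ, 1 < T₀ ∧ ∀ T : ℝ, T₀ ≤ T →
    ∃ p q : ℤ, ¬(p = 0 ∧ q = 0) ∧
      ν ![c⁻¹ * T * ((p : ℝ) + α * (q : ℝ)), T⁻¹ * (q : ℝ)] < criticalRadius ν

/-- The critical locus `L_ν ⊆ X`: the set of unimodular lattices meeting the open ball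
`B_ν(r_ν)` only at the origin. -/
def criticalLocus (ν : (Fin 2 → ℝ) → ℝ) : Set XSpace :=
  {x | ∃ g : SL2R, QuotientGroup.mk g = x ∧
    ∀ v ∈ latticePts g, ν v < criticalRadius ν → v = 0}


/-!
By `g_t u_α (p, q) = (eᵗ(p + αq), e⁻ᵗq)`, `α` is `ν`-Dirichlet improvable iff for some `s < 1`
the lattices `g_t Λ_α` eventually have a nonzero vector of `ν`-length `< s r_ν`, i.e. eventually
leave the set `K_δ` (`δ = s r_ν`) of lattices meeting `B_ν(δ)` only at `0`.
For `δ < r_ν`, `L_ν` lies in the interior of `K_δ`, which gives one direction. Conversely, the sets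
`K_δ` are compact modulo `SL₂(ℤ)` (Mahler's criterion, proved by Lagrange–Gauss reduction) and
decrease to `L_ν` as `δ ↑ r_ν`, so every open `U ⊇ L_ν` contains some `K_δ` with `δ < r_ν`.
-/

open Filter Topology
open scoped MatrixGroups

local notation "M₂" => Matrix (Fin 2) (Fin 2) ℝ

-- Mathlib's instance is stated for its own, definitionally equal, topology on `SL(n, R)`.
instance inst_s8 : IsTopologicalGroup SL2R := Matrix.SpecialLinearGroup.topologicalGroup

lemma sq_norm_le_dotProduct_self {ι : Type*} [Fintype ι] (v : ι → ℝ) : ‖v‖ ^ 2 ≤ v ⬝ᵥ v := by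
  have hle : ∀ i, v i ^ 2 ≤ v ⬝ᵥ v := fun i => by
    simpa [dotProduct, sq] using Finset.single_le_sum (f := fun j => v j * v j)
      (fun j _ => mul_self_nonneg (v j)) (Finset.mem_univ i)
  have hnonneg : 0 ≤ v ⬝ᵥ v := Finset.sum_nonneg fun i _ => mul_self_nonneg (v i)
  exact (Real.le_sqrt (norm_nonneg v) hnonneg).1
    ((pi_norm_le_iff_of_nonneg (Real.sqrt_nonneg _)).2 fun i => Real.abs_le_sqrt (hle i))

lemma abs_apply_le_of_reduced {A : M₂} {ε : ℝ} (hε : 0 < ε) (hA : A.det = 1)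
    (h0 : ε ≤ Aᵀ 0 ⬝ᵥ Aᵀ 0) (h01 : Aᵀ 0 ⬝ᵥ Aᵀ 0 ≤ Aᵀ 1 ⬝ᵥ Aᵀ 1)
    (hip : |Aᵀ 0 ⬝ᵥ Aᵀ 1| ≤ Aᵀ 0 ⬝ᵥ Aᵀ 0 / 2) (i j : Fin 2) : |A i j| ≤ √(2 + 1 / ε) := by
  set x := Aᵀ 0 ⬝ᵥ Aᵀ 0
  set y := Aᵀ 1 ⬝ᵥ Aᵀ 1
  set p := Aᵀ 0 ⬝ᵥ Aᵀ 1
  have hlag : x * y = p ^ 2 + A.det ^ 2 := by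
    simp only [x, y, p, det_fin_two, dotProduct, Fin.sum_univ_two, transpose_apply]
    ring
  rw [hA, one_pow] at hlag
  have hp : p ^ 2 ≤ (x / 2) ^ 2 := sq_le_sq' (abs_le.1 hip).1 (abs_le.1 hip).2
  have hx : x ≤ 2 := by nlinarith
  have hy : y ≤ 1 / 2 + 1 / ε := by
    have hxpos : 0 < x := hε.trans_le h0
    have : y ≤ x / 4 + 1 / x := by
      rw [← mul_le_mul_iff_of_pos_left hxpos]
      field_simp
      nlinarith
    have : 1 / x ≤ 1 / ε := one_div_le_one_div_of_le hε h0
    linarith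
  have hcol : ∀ j, Aᵀ j ⬝ᵥ Aᵀ j ≤ 2 + 1 / ε := by
    have : 0 < 1 / ε := by positivity
    intro j; fin_cases j
    · exact hx.trans (by linarith)
    · exact hy.trans (by linarith)
  refine Real.abs_le_sqrt ((?_ : A i j ^ 2 ≤ Aᵀ j ⬝ᵥ Aᵀ j).trans (hcol j))
  fin_cases i <;> simp [dotProduct, Fin.sum_univ_two] <;>
    nlinarith [mul_self_nonneg (A 0 j), mul_self_nonneg (A 1 j)]

lemma Matrix.SpecialLinearGroup.transpose_coe_ne_zero (γ : SL(2, ℤ)) (j : Fin 2) :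
    (γ : Matrix (Fin 2) (Fin 2) ℤ)ᵀ j ≠ 0 := by
  intro h
  have hdet : (γ : Matrix (Fin 2) (Fin 2) ℤ).det = 1 := γ.2
  have h0 := congrFun h 0
  have h1 := congrFun h 1
  rw [det_fin_two] at hdet
  fin_cases j <;> simp_all

namespace IsNorm

variable {ν : (Fin 2 → ℝ) → ℝ} (hν : IsNorm ν)
include hν

lemma map_zero : ν 0 = 0 := (hν.1 0).2 rfl

lemma nonneg (v : Fin 2 → ℝ) : 0 ≤ ν v := by
  have h := hν.2.2 v (-v)
  have h' := hν.2.1 (-1) v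
  rw [add_neg_cancel, hν.map_zero] at h
  rw [neg_one_smul, abs_neg, abs_one, one_mul] at h'
  linarith

lemma pos {v : Fin 2 → ℝ} (hv : v ≠ 0) : 0 < ν v :=
  (hν.nonneg v).lt_of_ne fun h => hv ((hν.1 v).1 h.symm)

lemma exists_le_mul_norm : ∃ C, 0 < C ∧ ∀ v, ν v ≤ C * ‖v‖ := by
  have h01 := add_nonneg (hν.nonneg (Pi.single 0 1)) (hν.nonneg (Pi.single 1 1))
  refine ⟨ν (Pi.single 0 1) + ν (Pi.single 1 1) + 1, by linarith, fun v => ?_⟩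
  have hv : v = v 0 • Pi.single 0 1 + v 1 • Pi.single 1 1 := by
    ext i; fin_cases i <;> simp
  have h0 : |v 0| ≤ ‖v‖ := by simpa using norm_le_pi_norm v 0
  have h1 : |v 1| ≤ ‖v‖ := by simpa using norm_le_pi_norm v 1
  calc ν v ≤ |v 0| * ν (Pi.single 0 1) + |v 1| * ν (Pi.single 1 1) := by
        rw [← hν.2.1, ← hν.2.1]; nth_rw 1 [hv]; exact hν.2.2 _ _
    _ ≤ _ := by nlinarith [hν.nonneg (Pi.single 0 1), hν.nonneg (Pi.single 1 1), norm_nonneg v]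

lemma continuous : Continuous ν := by
  obtain ⟨C, -, hC⟩ := hν.exists_le_mul_norm
  refine (LipschitzWith.of_le_add_mul' C fun v w => ?_).continuous
  calc ν v = ν (w + (v - w)) := by rw [add_sub_cancel]
    _ ≤ ν w + C * dist v w := by rw [dist_eq_norm]; exact (hν.2.2 _ _).trans (by gcongr; exact hC _)

end IsNorm

def latticeVec (g : SL2R) (m : Fin 2 → ℤ) : Fin 2 → ℝ :=
  (g : M₂) *ᵥ fun i => (m i : ℝ)

lemma mem_latticePts {g : SL2R} {v : Fin 2 → ℝ} : v ∈ latticePts g ↔ ∃ m, latticeVec g m = v :=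
  exists_congr fun _ => eq_comm

lemma latticeVec_apply (g : SL2R) (m : Fin 2 → ℤ) (i : Fin 2) :
    latticeVec g m i = g i 0 * m 0 + g i 1 * m 1 := by
  simp [latticeVec, mulVec, dotProduct, Fin.sum_univ_two]

lemma latticeVec_mul_coe (g : SL2R) (γ : SL(2, ℤ)) (m : Fin 2 → ℤ) :
    latticeVec (g * γ) m = latticeVec g (γ *ᵥ m) := by
  unfold latticeVec
  rw [Matrix.SpecialLinearGroup.coe_mul, ← mulVec_mulVec]
  congr 1
  ext i
  rw [Matrix.SpecialLinearGroup.coe_matrix_coe]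
  exact RingHom.map_mulVec (Int.castRingHom ℝ) _ m i |>.symm

lemma coe_mulVec_ne_zero (g : SL2R) {v : Fin 2 → ℝ} (hv : v ≠ 0) : (g : M₂) *ᵥ v ≠ 0 :=
  fun h => hv (eq_zero_of_mulVec_eq_zero (by simp) h)

lemma latticeVec_eq_zero_iff {g : SL2R} {m : Fin 2 → ℤ} : latticeVec g m = 0 ↔ m = 0 := by
  refine ⟨fun h => ?_, fun h => by simp [h, latticeVec]⟩
  by_contra hm
  refine coe_mulVec_ne_zero g (fun h0 => hm ?_) h
  ext i
  simpa using congrFun h0 i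

lemma latticePts_mul_of_mem_Gamma {g γ : SL2R} (hγ : γ ∈ Gamma) :
    latticePts (g * γ) = latticePts g := by
  obtain ⟨γ, rfl⟩ := hγ
  ext v
  simp only [mem_latticePts]
  constructor
  · rintro ⟨m, rfl⟩
    exact ⟨_, (latticeVec_mul_coe g γ m).symm⟩
  · rintro ⟨m, rfl⟩
    refine ⟨(γ⁻¹ : SL(2, ℤ)) *ᵥ m, ?_⟩
    rw [latticeVec_mul_coe, mulVec_mulVec, ← Matrix.SpecialLinearGroup.coe_mul, mul_inv_cancel,
      Matrix.SpecialLinearGroup.coe_one, one_mulVec]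

lemma continuous_latticeVec (m : Fin 2 → ℤ) : Continuous fun g : SL2R => latticeVec g m :=
  (continuous_induced_dom (f := fun g : SL2R => (g : M₂))).matrix_mulVec continuous_const

open scoped Matrix.Norms.Operator in
lemma finite_setOf_norm_latticeVec_le (g : SL2R) (R : ℝ) :
    {m | ‖latticeVec g m‖ ≤ R}.Finite := by
  have hball := (isCompact_closedBall (0 : Fin 2 → ℤ) (‖((g⁻¹ : SL2R) : M₂)‖ * R)).finite_of_discrete
  refine hball.subset fun m hm => ?_
  rw [mem_closedBall_zero_iff]
  calc ‖m‖ = ‖((g⁻¹ : SL2R) : M₂) *ᵥ latticeVec g m‖ := by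
        unfold latticeVec
        rw [mulVec_mulVec, ← Matrix.SpecialLinearGroup.coe_mul, inv_mul_cancel,
          Matrix.SpecialLinearGroup.coe_one, one_mulVec]
        rfl
    _ ≤ _ := (linfty_opNorm_mulVec _ _).trans (by gcongr; exact hm)

def AvoidsBall (ν : (Fin 2 → ℝ) → ℝ) (δ : ℝ) (g : SL2R) : Prop :=
  ∀ v ∈ latticePts g, ν v < δ → v = 0

section AvoidsBall

variable {ν : (Fin 2 → ℝ) → ℝ} {δ : ℝ} {g : SL2R}

lemma avoidsBall_iff : AvoidsBall ν δ g ↔ ∀ m ≠ 0, δ ≤ ν (latticeVec g m) := by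
  simp only [AvoidsBall, mem_latticePts, forall_exists_index, forall_apply_eq_imp_iff,
    latticeVec_eq_zero_iff]
  exact forall_congr' fun m => by rw [← not_le]; exact not_imp_comm

lemma criticalLocus_eq_image (ν : (Fin 2 → ℝ) → ℝ) :
    criticalLocus ν = QuotientGroup.mk '' {g | AvoidsBall ν (criticalRadius ν) g} :=
  Set.ext fun _ => exists_congr fun _ => and_comm

lemma AvoidsBall.of_mk_eq {g' : SL2R} (h : AvoidsBall ν δ g) (he : (g : XSpace) = g') :
    AvoidsBall ν δ g' := by
  have hg' : g' = g * (g⁻¹ * g') := (mul_inv_cancel_left g g').symm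
  rw [AvoidsBall, hg', latticePts_mul_of_mem_Gamma (QuotientGroup.eq.1 he)]
  exact h

lemma AvoidsBall.mono {δ' : ℝ} (h : AvoidsBall ν δ g) (hδ : δ' ≤ δ) : AvoidsBall ν δ' g :=
  fun v hv hνv => h v hv (hνv.trans_le hδ)

lemma IsNorm.avoidsBall_of_nonpos (hν : IsNorm ν) (hδ : δ ≤ 0) (g : SL2R) : AvoidsBall ν δ g :=
  fun v _ hνv => absurd (hνv.trans_le hδ) (hν.nonneg v).not_gt

lemma IsNorm.isClosed_setOf_avoidsBall (hν : IsNorm ν) (δ : ℝ) :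
    IsClosed {g | AvoidsBall ν δ g} := by
  simp only [avoidsBall_iff, Set.ofPred_forall]
  exact isClosed_iInter fun m => isClosed_iInter fun _ =>
    isClosed_le continuous_const (hν.continuous.comp (continuous_latticeVec m))

lemma IsNorm.eventually_avoidsBall (hν : IsNorm ν) {r : ℝ} (h : AvoidsBall ν r g) (hδ : δ < r) :
    ∀ᶠ g' in 𝓝 g, AvoidsBall ν δ g' := by
  rcases le_or_gt δ 0 with hδ0 | hδ0
  · exact .of_forall (hν.avoidsBall_of_nonpos hδ0)
  set θ := δ / r
  have hr : 0 < r := hδ0.trans hδ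
  have hθ : θ < 1 := (div_lt_one hr).2 hδ
  have hcont : Continuous fun z : SL2R × (Fin 2 → ℝ) => ν ((z.1 : M₂) *ᵥ z.2) :=
    hν.continuous.comp ((continuous_induced_dom.comp continuous_fst).matrix_mulVec continuous_snd)
  -- By homogeneity it suffices to compare `g'` with `g` on the unit sphere, which is compact.
  have hsphere : ∀ᶠ g' : SL2R in 𝓝 g, ∀ u ∈ Metric.sphere (0 : Fin 2 → ℝ) 1,
      θ * ν ((g : M₂) *ᵥ u) < ν ((g' : M₂) *ᵥ u) := by
    refine (isCompact_sphere 0 1).eventually_forall_of_forall_eventually fun u hu => ?_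
    refine Tendsto.eventually_lt (f := fun z : SL2R × _ => θ * ν ((g : M₂) *ᵥ z.2))
      ((continuous_const.mul (hcont.comp (continuous_const.prodMk continuous_snd))).tendsto _)
      (hcont.tendsto _) ?_
    have := hν.pos (coe_mulVec_ne_zero g (ne_zero_of_mem_sphere one_ne_zero ⟨u, hu⟩))
    dsimp only
    exact mul_lt_of_lt_one_left this hθ
  filter_upwards [hsphere] with g' hg'
  rw [avoidsBall_iff] at h ⊢
  intro m hm
  set v : Fin 2 → ℝ := fun i => (m i : ℝ)
  have hv : v ≠ 0 := fun h0 => hm (funext fun i => by simpa [v] using congrFun h0 i)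
  set u := ‖v‖⁻¹ • v
  have hu : u ∈ Metric.sphere (0 : Fin 2 → ℝ) 1 := by
    rw [mem_sphere_zero_iff_norm, norm_smul, norm_inv, norm_norm,
      inv_mul_cancel₀ (norm_ne_zero_iff.2 hv)]
  have hscale (h : SL2R) : ν (latticeVec h m) = ‖v‖ * ν ((h : M₂) *ᵥ u) := by
    rw [latticeVec, ← abs_norm, ← hν.2.1, ← mulVec_smul, smul_inv_smul₀ (norm_ne_zero_iff.2 hv)]
  calc δ = θ * r := (div_mul_cancel₀ δ hr.ne').symm
    _ ≤ θ * ν (latticeVec g m) := by gcongr; exact h m hm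
    _ = ‖v‖ * (θ * ν ((g : M₂) *ᵥ u)) := by rw [hscale]; ring
    _ ≤ ‖v‖ * ν ((g' : M₂) *ᵥ u) := by gcongr; exact (hg' u hu).le
    _ = ν (latticeVec g' m) := (hscale g').symm

end AvoidsBall

lemma coe_mul_coe_apply (h : SL2R) (γ : SL(2, ℤ)) (i j : Fin 2) :
    ((h * γ : SL2R) : M₂) i j = h i 0 * γ 0 j + h i 1 * γ 1 j := by
  rw [Matrix.SpecialLinearGroup.coe_mul, Matrix.SpecialLinearGroup.coe_matrix_coe, mul_apply,
    Fin.sum_univ_two]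
  simp

lemma transpose_coe_mul_coe (g : SL2R) (γ : SL(2, ℤ)) (j : Fin 2) :
    ((g * γ : SL2R) : M₂)ᵀ j = latticeVec g ((γ : Matrix (Fin 2) (Fin 2) ℤ)ᵀ j) := by
  ext i
  rw [transpose_apply, coe_mul_coe_apply, latticeVec_apply]
  rfl

lemma exists_forall_firstCol_le (g : SL2R) :
    ∃ γ : SL(2, ℤ), ∀ γ' : SL(2, ℤ),
      ((g * γ : SL2R) : M₂)ᵀ 0 ⬝ᵥ ((g * γ : SL2R) : M₂)ᵀ 0 ≤
        ((g * γ' : SL2R) : M₂)ᵀ 0 ⬝ᵥ ((g * γ' : SL2R) : M₂)ᵀ 0 := by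
  simp only [transpose_coe_mul_coe]
  set f : (Fin 2 → ℤ) → ℝ := fun m => latticeVec g m ⬝ᵥ latticeVec g m
  set e := ((1 : SL(2, ℤ)) : Matrix (Fin 2) (Fin 2) ℤ)ᵀ 0
  set S := {m | (∃ γ : SL(2, ℤ), (γ : Matrix (Fin 2) (Fin 2) ℤ)ᵀ 0 = m) ∧ f m ≤ f e}
  have hS : S.Finite := (finite_setOf_norm_latticeVec_le g √(f e)).subset fun m hm =>
    Real.le_sqrt_of_sq_le ((sq_norm_le_dotProduct_self _).trans hm.2)
  obtain ⟨_, ⟨⟨γ, rfl⟩, hγe⟩, hγ⟩ := S.exists_min_image f hS ⟨e, ⟨1, rfl⟩, le_rfl⟩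
  refine ⟨γ, fun γ' => ?_⟩
  by_cases h : f ((γ' : Matrix (Fin 2) (Fin 2) ℤ)ᵀ 0) ≤ f e
  · exact hγ _ ⟨⟨γ', rfl⟩, h⟩
  · exact hγe.trans (not_le.1 h).le

lemma exists_abs_apply_mul_le {h : SL2R} {ε : ℝ} (hε : 0 < ε)
    (h0 : ε ≤ (h : M₂)ᵀ 0 ⬝ᵥ (h : M₂)ᵀ 0)
    (hmin : ∀ γ : SL(2, ℤ),
      (h : M₂)ᵀ 0 ⬝ᵥ (h : M₂)ᵀ 0 ≤ ((h * γ : SL2R) : M₂)ᵀ 0 ⬝ᵥ ((h * γ : SL2R) : M₂)ᵀ 0) :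
    ∃ τ : SL(2, ℤ), ∀ i j, |((h * τ : SL2R) : M₂) i j| ≤ √(2 + 1 / ε) := by
  set x := (h : M₂)ᵀ 0 ⬝ᵥ (h : M₂)ᵀ 0
  set p := (h : M₂)ᵀ 0 ⬝ᵥ (h : M₂)ᵀ 1
  set k : ℤ := round (p / x)
  let τ : SL(2, ℤ) := ⟨!![1, -k; 0, 1], by simp [det_fin_two_of]⟩
  let ρ : SL(2, ℤ) := ⟨!![-k, -1; 1, 0], by simp [det_fin_two_of]⟩
  have hcol0 : ((h * τ : SL2R) : M₂)ᵀ 0 = (h : M₂)ᵀ 0 := by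
    ext i; rw [transpose_apply, coe_mul_coe_apply]; simp [τ]
  have hcol1 : ((h * τ : SL2R) : M₂)ᵀ 1 = (h : M₂)ᵀ 1 - (k : ℝ) • (h : M₂)ᵀ 0 := by
    ext i; rw [transpose_apply, coe_mul_coe_apply]; simp [τ]; ring
  have hcolρ : ((h * ρ : SL2R) : M₂)ᵀ 0 = ((h * τ : SL2R) : M₂)ᵀ 1 := by
    rw [hcol1]; ext i; rw [transpose_apply, coe_mul_coe_apply]; simp [ρ]; ring
  have hx : 0 < x := hε.trans_le h0
  refine ⟨τ, abs_apply_le_of_reduced hε (h * τ).2 (hcol0 ▸ h0) (hcol0 ▸ hcolρ ▸ hmin ρ) ?_⟩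
  rw [hcol0, hcol1, dotProduct_sub, dotProduct_smul, smul_eq_mul]
  calc |p - k * x| = |p / x - k| * x := by
        rw [← abs_of_pos hx, ← abs_mul, abs_of_pos hx, sub_mul, div_mul_cancel₀ _ hx.ne']
    _ ≤ 1 / 2 * x := by gcongr; exact abs_sub_round _
    _ = x / 2 := by ring

lemma exists_mem_Gamma_abs_le {ε : ℝ} (hε : 0 < ε) {g : SL2R}
    (hg : ∀ m ≠ 0, ε ≤ ‖latticeVec g m‖) :
    ∃ γ ∈ Gamma, ∀ i j, |((g * γ : SL2R) : M₂) i j| ≤ √(2 + 1 / ε ^ 2) := by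
  obtain ⟨γ₁, hγ₁⟩ := exists_forall_firstCol_le g
  have h0 : ε ^ 2 ≤ ((g * γ₁ : SL2R) : M₂)ᵀ 0 ⬝ᵥ
      ((g * γ₁ : SL2R) : M₂)ᵀ 0 := by
    rw [transpose_coe_mul_coe]
    exact (pow_le_pow_left₀ hε.le (hg _ (γ₁.transpose_coe_ne_zero 0)) 2).trans
      (sq_norm_le_dotProduct_self _)
  obtain ⟨τ, hτ⟩ := exists_abs_apply_mul_le (pow_pos hε 2) h0 fun γ => by
    simpa only [map_mul, mul_assoc] using hγ₁ (γ₁ * γ)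
  exact ⟨↑(γ₁ * τ), ⟨_, rfl⟩, by simpa only [map_mul, mul_assoc] using hτ⟩

lemma setOf_abs_le_eq_preimage (K : ℝ) :
    {g : SL2R | ∀ i j, |(g : M₂) i j| ≤ K} =
      (↑) ⁻¹' Set.pi Set.univ fun _ => Set.pi Set.univ fun _ => Set.Icc (-K) K := by
  ext g
  exact ⟨fun h i _ j _ => abs_le.1 (h i j), fun h i j => abs_le.2 (h i trivial j trivial)⟩

lemma isCompact_setOf_abs_le (K : ℝ) :
    IsCompact {g : SL2R | ∀ i j, |(g : M₂) i j| ≤ K} := by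
  rw [setOf_abs_le_eq_preimage]
  exact Matrix.SpecialLinearGroup.isClosedEmbedding_val.isCompact_preimage
    (isCompact_univ_pi fun _ => isCompact_univ_pi fun _ => isCompact_Icc)

lemma isClosed_setOf_abs_le (K : ℝ) :
    IsClosed {g : SL2R | ∀ i j, |(g : M₂) i j| ≤ K} := by
  rw [setOf_abs_le_eq_preimage]
  exact (isClosed_set_pi fun _ _ => isClosed_set_pi fun _ _ => isClosed_Icc).preimage
    continuous_induced_dom

lemma IsNorm.exists_forall_avoidsBall_mem {ν : (Fin 2 → ℝ) → ℝ} (hν : IsNorm ν)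
    {U : Set XSpace} (hU : IsOpen U) (hLU : criticalLocus ν ⊆ U) (hr : 0 < criticalRadius ν) :
    ∃ δ, 0 < δ ∧ δ < criticalRadius ν ∧ ∀ g, AvoidsBall ν δ g → (g : XSpace) ∈ U := by
  by_contra! H
  obtain ⟨u, hu_mono, hu_mem, hu_lim⟩ := exists_seq_strictMono_tendsto' hr
  obtain ⟨C, hC, hνC⟩ := hν.exists_le_mul_norm
  set K := √(2 + 1 / (u 0 / C) ^ 2)
  set t : ℕ → Set SL2R := fun n => {g | ∀ i j, |(g : M₂) i j| ≤ K} ∩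
    {g | AvoidsBall ν (u n) g} ∩ ((↑) ⁻¹' U)ᶜ
  have ht_closed (n : ℕ) : IsClosed (t n) :=
    ((isClosed_setOf_abs_le K).inter (hν.isClosed_setOf_avoidsBall _)).inter
      (hU.preimage QuotientGroup.continuous_mk).isClosed_compl
  have ht_nonempty (n : ℕ) : (t n).Nonempty := by
    obtain ⟨g, hg, hgU⟩ := H (u n) (hu_mem n).1 (hu_mem n).2
    obtain ⟨γ, hγ, hbox⟩ := exists_mem_Gamma_abs_le (div_pos (hu_mem 0).1 hC) (g := g)
      fun m hm => by
        rw [div_le_iff₀' hC]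
        exact (avoidsBall_iff.1 (hg.mono (hu_mono.monotone (Nat.zero_le n))) m hm).trans (hνC _)
    have he : (g : XSpace) = ↑(g * γ) := (QuotientGroup.mk_mul_of_mem g hγ).symm
    exact ⟨g * γ, ⟨hbox, hg.of_mk_eq he⟩, fun h => hgU (by rwa [he])⟩
  have ht_anti : Antitone t := fun n n' hn =>
    Set.inter_subset_inter_left _ <| Set.inter_subset_inter_right _ fun g hg =>
      AvoidsBall.mono hg (hu_mono.monotone hn)
  obtain ⟨g, hg⟩ := IsCompact.nonempty_iInter_of_directed_nonempty_isCompact_isClosed t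
    ht_anti.directed_ge ht_nonempty
    (fun n => ((isCompact_setOf_abs_le K).inter_right (hν.isClosed_setOf_avoidsBall _)).inter_right
      (hU.preimage QuotientGroup.continuous_mk).isClosed_compl) ht_closed
  simp only [Set.mem_iInter, t] at hg
  refine (hg 0).2 (hLU ⟨g, rfl, avoidsBall_iff.2 fun m hm => ?_⟩)
  exact le_of_tendsto' hu_lim fun n => avoidsBall_iff.1 (hg n).1.2 m hm

lemma latticeVec_gDiag_mul_uMat (t α : ℝ) (m : Fin 2 → ℤ) :
    latticeVec (gDiag t * uMat α) m = ![Real.exp t * (m 0 + α * m 1), Real.exp (-t) * m 1] := by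
  have hmat : ((gDiag t * uMat α : SL2R) : M₂) =
      !![Real.exp t, Real.exp t * α; 0, Real.exp (-t)] := by
    rw [Matrix.SpecialLinearGroup.coe_mul]
    simp [gDiag, uMat]
  ext i
  fin_cases i
  · simp [latticeVec_apply, hmat]; ring
  · simp [latticeVec_apply, hmat]

lemma latticeVec_gDiag_mul_uMat_eq_smul {s : ℝ} (hs : 0 < s) (t α : ℝ) (m : Fin 2 → ℤ) :
    latticeVec (gDiag t * uMat α) m =
      s • ![(s ^ 2)⁻¹ * (s * Real.exp t) * (m 0 + α * m 1), (s * Real.exp t)⁻¹ * m 1] := by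
  rw [latticeVec_gDiag_mul_uMat]
  ext i
  fin_cases i <;> simp [Real.exp_neg] <;> field_simp

lemma IsNorm.dirichletImprovable_iff {ν : (Fin 2 → ℝ) → ℝ} (hν : IsNorm ν) (α : ℝ) :
    DirichletImprovable ν α ↔ ∃ s, 0 < s ∧ s < 1 ∧ ∃ t₀, ∀ t ≥ t₀,
      ¬AvoidsBall ν (s * criticalRadius ν) (gDiag t * uMat α) := by
  constructor
  · rintro ⟨c, hc0, hc1, T₀, hT₀, hT⟩
    have hs : 0 < √c := Real.sqrt_pos.2 hc0
    refine ⟨√c, hs, (Real.sqrt_lt' one_pos).2 (by rwa [one_pow]), Real.log (T₀ / √c),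
      fun t ht => ?_⟩
    obtain ⟨p, q, hpq, hlt⟩ := hT (√c * Real.exp t)
      ((div_le_iff₀' hs).1 ((Real.log_le_iff_le_exp (div_pos (zero_lt_one.trans hT₀) hs)).1 ht))
    intro hav
    refine (avoidsBall_iff.1 hav ![p, q] fun h =>
      hpq ⟨by simpa using congrFun h 0, by simpa using congrFun h 1⟩).not_gt ?_
    rw [latticeVec_gDiag_mul_uMat_eq_smul hs, Real.sq_sqrt hc0.le, hν.2.1, abs_of_pos hs]
    simpa using mul_lt_mul_of_pos_left hlt hs
  · rintro ⟨s, hs0, hs1, t₀, ht⟩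
    refine ⟨s ^ 2, by positivity, by nlinarith, max 2 (s * Real.exp t₀),
      one_lt_two.trans_le (le_max_left _ _), fun T hT => ?_⟩
    have hT0 : 0 < T := two_pos.trans_le ((le_max_left _ _).trans hT)
    have hsT : s * Real.exp (Real.log (T / s)) = T := by
      rw [Real.exp_log (div_pos hT0 hs0), mul_div_cancel₀ _ hs0.ne']
    have htT : t₀ ≤ Real.log (T / s) := by
      rw [Real.le_log_iff_exp_le (div_pos hT0 hs0), le_div_iff₀' hs0]
      exact (le_max_right _ _).trans hT
    obtain ⟨m, hm, hlt⟩ : ∃ m ≠ 0,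
        ν (latticeVec (gDiag (Real.log (T / s)) * uMat α) m) < s * criticalRadius ν := by
      simpa [avoidsBall_iff] using ht _ htT
    refine ⟨m 0, m 1, fun h => hm (funext (Fin.forall_fin_two.2 h)), ?_⟩
    rw [latticeVec_gDiag_mul_uMat_eq_smul hs0, hsT, hν.2.1, abs_of_pos hs0] at hlt
    exact lt_of_mul_lt_mul_left hlt hs0.le

/-- `α` is `ν`-Dirichlet improvable if and only if there are `t₀ > 0` and an open set
`U ⊇ L_ν` such that `g_t Λ_α ∉ U` for all `t > t₀`. -/
theorem stmt8 (ν : (Fin 2 → ℝ) → ℝ) (hν : IsNorm ν) (α : ℝ) :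
    DirichletImprovable ν α ↔
      ∃ t₀ : ℝ, 0 < t₀ ∧ ∃ U : Set XSpace, IsOpen U ∧ criticalLocus ν ⊆ U ∧
        ∀ t : ℝ, t₀ < t → gDiag t • LatX α ∉ U := by
  rw [hν.dirichletImprovable_iff]
  constructor
  · rintro ⟨s, hs0, hs1, t₁, ht₁⟩
    have hr : 0 < criticalRadius ν := pos_of_mul_pos_right
      (not_le.1 fun h => ht₁ t₁ le_rfl (hν.avoidsBall_of_nonpos h _)) hs0.le
    refine ⟨max t₁ 1, by positivity, (↑) '' interior {g | AvoidsBall ν (s * criticalRadius ν) g},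
      QuotientGroup.isOpenMap_coe _ isOpen_interior, ?_, ?_⟩
    · rw [criticalLocus_eq_image]
      exact Set.image_mono fun g hg => mem_interior_iff_mem_nhds.2
        (hν.eventually_avoidsBall hg (mul_lt_of_lt_one_left hr hs1))
    · rintro t ht ⟨g, hg, hgt⟩
      exact ht₁ t (le_of_max_le_left ht.le) ((interior_subset hg).of_mk_eq hgt)
  · rintro ⟨t₀, -, U, hU, hLU, hout⟩
    have hr : 0 < criticalRadius ν := by
      by_contra! hr
      exact hout (t₀ + 1) (lt_add_one t₀) (hLU ⟨_, rfl, hν.avoidsBall_of_nonpos hr _⟩)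
    obtain ⟨δ, hδ0, hδr, hδU⟩ := hν.exists_forall_avoidsBall_mem hU hLU hr
    refine ⟨δ / criticalRadius ν, div_pos hδ0 hr, (div_lt_one hr).2 hδr, t₀ + 1, fun t ht hav => ?_⟩
    rw [div_mul_cancel₀ _ hr.ne'] at hav
    exact hout t (by linarith) (hδU _ hav)
end
end

section
/- Let Λ be a unimodular lattice in ℝ² and let r = (r₁, r₂), s = (s₁, s₂) be a pair of consecutive minimal vectors in Λ. Then the only point of Λ in the open rectangle {(x₁, x₂) ∈ ℝ² : |x₁| < |r₁| and |x₂| < |s₂|} is 0, and (r, s) is a ℤ-basis of Λ, i.e. every vector of Λ is an integer linear combination of r and s. -/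
open Matrix
noncomputable section

/-- `r` is a minimal vector of the lattice `Λ`: it is a nonzero lattice point, and any
nonzero lattice point `s` with `|s₁| ≤ |r₁|` and `|s₂| ≤ |r₂|` satisfies
`|s₁| = |r₁|` and `|s₂| = |r₂|`. -/
def IsMinimalVector (Λ : Set (Fin 2 → ℝ)) (r : Fin 2 → ℝ) : Prop :=
  r ∈ Λ ∧ r ≠ 0 ∧ ∀ s ∈ Λ, s ≠ 0 → |s 0| ≤ |r 0| → |s 1| ≤ |r 1| →
    |s 0| = |r 0| ∧ |s 1| = |r 1|

/-- `(r, s)` is a pair of consecutive minimal vectors of `Λ`. -/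
def ConsecutiveMinimalVectors (Λ : Set (Fin 2 → ℝ)) (r s : Fin 2 → ℝ) : Prop :=
  IsMinimalVector Λ r ∧ IsMinimalVector Λ s ∧ |r 1| < |s 1| ∧
    ¬∃ w : Fin 2 → ℝ, IsMinimalVector Λ w ∧ |r 1| < |w 1| ∧ |w 1| < |s 1|


lemma lattice_combo (g : SL2R) {v r s : Fin 2 → ℝ} (hv : v ∈ latticePts g)
    (hr : r ∈ latticePts g) (hs : s ∈ latticePts g) (a b : ℤ) :
    v - (a : ℝ) • r - (b : ℝ) • s ∈ latticePts g := by
  obtain ⟨mv, rfl⟩ := hv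
  obtain ⟨mr, rfl⟩ := hr
  obtain ⟨ms, rfl⟩ := hs
  refine ⟨fun i => mv i - a * mr i - b * ms i, ?_⟩
  have : (fun i => ((mv i - a * mr i - b * ms i : ℤ) : ℝ)) =
      (fun i => (mv i : ℝ)) - (a:ℝ) • (fun i => (mr i : ℝ)) - (b:ℝ) • (fun i => (ms i : ℝ)) := by
    funext i
    simp [Pi.smul_apply, smul_eq_mul]
  rw [this, Matrix.mulVec_sub, Matrix.mulVec_sub, Matrix.mulVec_smul, Matrix.mulVec_smul]

lemma lattice_inv (g : SL2R) (x : Fin 2 → ℝ) :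
    ((g⁻¹ : SL2R) : Matrix (Fin 2) (Fin 2) ℝ).mulVec ((g : Matrix (Fin 2) (Fin 2) ℝ).mulVec x) = x := by
  rw [Matrix.mulVec_mulVec]
  have : ((g⁻¹ : SL2R) : Matrix (Fin 2) (Fin 2) ℝ) * (g : Matrix (Fin 2) (Fin 2) ℝ) = 1 := by
    rw [← Matrix.SpecialLinearGroup.coe_mul, inv_mul_cancel, Matrix.SpecialLinearGroup.coe_one]
  rw [this, Matrix.one_mulVec]

lemma lattice_bounded_finite (g : SL2R) (B : ℝ) :
    {x : Fin 2 → ℝ | x ∈ latticePts g ∧ |x 0| ≤ B ∧ |x 1| ≤ B}.Finite := by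
  set h : Matrix (Fin 2) (Fin 2) ℝ := ((g⁻¹ : SL2R) : Matrix (Fin 2) (Fin 2) ℝ) with hh
  set A : ℝ := |h 0 0| + |h 0 1| + |h 1 0| + |h 1 1| with hA
  have habs : ∀ i j : Fin 2, |h i j| ≤ A := by
    simp only [Fin.forall_fin_two]
    refine ⟨⟨?_, ?_⟩, ?_, ?_⟩ <;> simp only [hA] <;>
      linarith [abs_nonneg (h 0 0), abs_nonneg (h 0 1), abs_nonneg (h 1 0), abs_nonneg (h 1 1)]
  have hA0 : 0 ≤ A := le_trans (abs_nonneg _) (habs 0 0)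
  set N : ℤ := ⌈2 * A * |B|⌉ with hN
  have hsub : {x : Fin 2 → ℝ | x ∈ latticePts g ∧ |x 0| ≤ B ∧ |x 1| ≤ B} ⊆
      (fun m : Fin 2 → ℤ => (g : Matrix (Fin 2) (Fin 2) ℝ).mulVec (fun i => (m i : ℝ))) ''
        (Set.Icc (fun _ => -N) (fun _ => N)) := by
    rintro x ⟨⟨m, rfl⟩, hx0, hx1⟩
    refine ⟨m, ?_, rfl⟩
    set x := (g : Matrix (Fin 2) (Fin 2) ℝ).mulVec (fun i => (m i : ℝ)) with hxdef
    have hmx : (fun i => (m i : ℝ)) = h.mulVec x := by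
      rw [hxdef, lattice_inv]
    have key : ∀ i : Fin 2, |m i| ≤ N := by
      intro i
      have h1 : (m i : ℝ) = h i 0 * x 0 + h i 1 * x 1 := by
        have := congrFun hmx i
        simpa [Matrix.mulVec, dotProduct, Fin.sum_univ_two] using this
      have hb0 : |x 0| ≤ |B| := hx0.trans (le_abs_self B)
      have hb1 : |x 1| ≤ |B| := hx1.trans (le_abs_self B)
      have t0 : |h i 0| * |x 0| ≤ A * |B| :=
        mul_le_mul (habs i 0) hb0 (abs_nonneg _) hA0
      have t1 : |h i 1| * |x 1| ≤ A * |B| :=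
        mul_le_mul (habs i 1) hb1 (abs_nonneg _) hA0
      have hr : |(m i : ℝ)| ≤ 2 * A * |B| := by
        rw [h1]
        calc |h i 0 * x 0 + h i 1 * x 1| ≤ |h i 0 * x 0| + |h i 1 * x 1| := abs_add_le _ _
          _ = |h i 0| * |x 0| + |h i 1| * |x 1| := by rw [abs_mul, abs_mul]
          _ ≤ 2 * A * |B| := by linarith
      have : |(m i : ℝ)| ≤ (N : ℝ) := hr.trans (Int.le_ceil _)
      exact_mod_cast this
    exact ⟨fun i => (abs_le.1 (key i)).1, fun i => (abs_le.1 (key i)).2⟩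
  exact ((Set.finite_Icc _ _).image _).subset hsub

/-- If `(r, s)` are consecutive minimal vectors of a unimodular lattice `Λ = g ℤ²`, then
the only lattice point in the open rectangle `(-|r₁|, |r₁|) × (-|s₂|, |s₂|)` is `0`, and
every lattice point is an integer linear combination of `r` and `s`. -/
theorem stmt13 (g : SL2R) (r s : Fin 2 → ℝ)
    (h : ConsecutiveMinimalVectors (latticePts g) r s) :
    (∀ v ∈ latticePts g, |v 0| < |r 0| → |v 1| < |s 1| → v = 0) ∧
      (∀ v ∈ latticePts g, ∃ a b : ℤ, v = (a : ℝ) • r + (b : ℝ) • s) := by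
  obtain ⟨⟨hrΛ, hr0, hrmin⟩, ⟨hsΛ, hsne, hsmin⟩, hrs, hno⟩ := h
  have hs0r0 : |s 0| < |r 0| := by
    by_contra hc
    push_neg at hc
    have := hsmin r hrΛ hr0 hc hrs.le
    exact absurd this.2 (ne_of_lt hrs)
  have part1 : ∀ v ∈ latticePts g, |v 0| < |r 0| → |v 1| < |s 1| → v = 0 := by
    intro v hv hv0 hv1
    by_contra hvne
    set S := {x : Fin 2 → ℝ | x ∈ latticePts g ∧ x ≠ 0 ∧ |x 0| ≤ |v 0| ∧ |x 1| ≤ |v 1|} with hS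
    have hSfin : S.Finite := by
      refine (lattice_bounded_finite g (max |v 0| |v 1|)).subset ?_
      rintro x ⟨h1, _, h3, h4⟩
      exact ⟨h1, h3.trans (le_max_left _ _), h4.trans (le_max_right _ _)⟩
    have hSne : S.Nonempty := ⟨v, hv, hvne, le_refl _, le_refl _⟩
    obtain ⟨w, hwS, hwmin⟩ :=
      Set.exists_min_image S (fun x => toLex (|x 0|, |x 1|)) hSfin hSne
    obtain ⟨hwΛ, hwne, hw0, hw1⟩ := hwS
    have hwisMin : IsMinimalVector (latticePts g) w := by
      refine ⟨hwΛ, hwne, fun u huΛ hune hu0 hu1 => ?_⟩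
      have huS : u ∈ S := ⟨huΛ, hune, hu0.trans hw0, hu1.trans hw1⟩
      have hle := hwmin u huS
      rw [Prod.Lex.le_iff] at hle
      rcases hle with hlt | ⟨heq, hle2⟩
      · exact absurd hu0 (not_le.2 hlt)
      · exact ⟨heq.symm, le_antisymm hu1 hle2⟩
    have hrw : |r 1| < |w 1| := by
      by_contra hc
      push_neg at hc
      have := hrmin w hwΛ hwne (by linarith) hc
      linarith [this.1]
    exact hno ⟨w, hwisMin, hrw, lt_of_le_of_lt hw1 hv1⟩
  refine ⟨part1, ?_⟩
  intro v hv
  have hs1pos : 0 < |s 1| := lt_of_le_of_lt (abs_nonneg _) hrs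
  have hr0pos : 0 < |r 0| := lt_of_le_of_lt (abs_nonneg _) hs0r0
  set d := r 0 * s 1 - r 1 * s 0 with hd
  have hdne : d ≠ 0 := by
    intro h0
    have heq : r 0 * s 1 = r 1 * s 0 := by
      have := hd ▸ h0; linarith [sub_eq_zero.1 this]
    have h2 : |r 0| * |s 1| = |r 1| * |s 0| := by
      rw [← abs_mul, ← abs_mul, heq]
    nlinarith [abs_nonneg (r 1), abs_nonneg (s 0)]
  set α := (v 0 * s 1 - v 1 * s 0) / d with hα
  set β := (r 0 * v 1 - r 1 * v 0) / d with hβ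
  have hv0eq : v 0 = α * r 0 + β * s 0 := by
    rw [hα, hβ]; field_simp; ring
  have hv1eq : v 1 = α * r 1 + β * s 1 := by
    rw [hα, hβ]; field_simp; ring
  refine ⟨round α, round β, ?_⟩
  set a : ℤ := round α with ha
  set b : ℤ := round β with hb
  have hαa : |α - (a : ℝ)| ≤ 1 / 2 := abs_sub_round α
  have hβb : |β - (b : ℝ)| ≤ 1 / 2 := abs_sub_round β
  set v' := v - (a : ℝ) • r - (b : ℝ) • s with hv'
  have hv'Λ : v' ∈ latticePts g := lattice_combo g hv hrΛ hsΛ a b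
  have hv'0 : v' 0 = (α - a) * r 0 + (β - b) * s 0 := by
    simp only [hv', Pi.sub_apply, Pi.smul_apply, smul_eq_mul]
    rw [hv0eq]; ring
  have hv'1 : v' 1 = (α - a) * r 1 + (β - b) * s 1 := by
    simp only [hv', Pi.sub_apply, Pi.smul_apply, smul_eq_mul]
    rw [hv1eq]; ring
  have habs0 : |v' 0| < |r 0| := by
    rw [hv'0]
    calc |(α - a) * r 0 + (β - b) * s 0| ≤ |(α - a) * r 0| + |(β - b) * s 0| := abs_add_le _ _
      _ = |α - (a:ℝ)| * |r 0| + |β - (b:ℝ)| * |s 0| := by rw [abs_mul, abs_mul]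
      _ < |r 0| := by nlinarith [abs_nonneg (α - (a:ℝ)), abs_nonneg (β - (b:ℝ)), abs_nonneg (s 0)]
  have habs1 : |v' 1| < |s 1| := by
    rw [hv'1]
    calc |(α - a) * r 1 + (β - b) * s 1| ≤ |(α - a) * r 1| + |(β - b) * s 1| := abs_add_le _ _
      _ = |α - (a:ℝ)| * |r 1| + |β - (b:ℝ)| * |s 1| := by rw [abs_mul, abs_mul]
      _ < |s 1| := by nlinarith [abs_nonneg (α - (a:ℝ)), abs_nonneg (β - (b:ℝ)), abs_nonneg (r 1)]
  have hz := part1 v' hv'Λ habs0 habs1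
  rw [hv'] at hz
  have : v - ((a : ℝ) • r + (b : ℝ) • s) = 0 := by rw [← hz]; abel
  exact sub_eq_zero.1 this
end
end

section
/- Let Λ be a unimodular lattice in ℝ² and let r = (r₁, r₂), s = (s₁, s₂) be a pair of consecutive minimal vectors in Λ with 0 ≤ r₂ < s₂ and such that if r₂ = 0 then r₁s₁ ≤ 0. Then r₁ ≠ 0, and setting x = −s₁/r₁ and y = r₂/s₂, the pair (x, y) belongs to the set U = (0,1)² ∪ ([0,1/2] × {0}) ∪ ({0} × [0,1/2]). -/
open Matrix
noncomputable section

/-!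
Minimality of `s` tested against `r` gives `|s₁| < |r₁|`, so once `r₁s₁ ≤ 0` is known,
`x = |s₁|/|r₁|` lies in `[0, 1)`. For `r₂ > 0` the sign condition comes from consecutiveness:
a nonzero lattice vector `w` with `|w₂| < |s₂|` lies above a minimal vector, which cannot sit
strictly between `r` and `s`, hence `|w₁| ≥ |r₁|`; for `w = s - r` this excludes equal signs.
The bounds `1/2` come from testing minimality against `r + s` (if `r₂ = 0` and `x > 1/2`, it
undercuts `s`) and against `s - r` (if `s₁ = 0` and `y > 1/2`, it undercuts `r`).
-/

open Set

theorem abs_sub_lt_abs_of_mul_pos {a b : ℝ} (hab : 0 < a * b) (hba : |b| < |a|) :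
    |b - a| < |a| := by
  rcases pos_and_pos_or_neg_and_neg_of_mul_pos hab with ⟨ha, hb⟩ | ⟨ha, hb⟩
  · rw [abs_of_pos ha, abs_of_pos hb] at *
    exact abs_sub_lt_iff.2 ⟨by linarith, by linarith⟩
  · rw [abs_of_neg ha, abs_of_neg hb] at *
    exact abs_sub_lt_iff.2 ⟨by linarith, by linarith⟩

theorem abs_add_lt_abs_of_mul_nonpos {a b : ℝ} (hab : a * b ≤ 0) (hba : |b| < |a|)
    (hab' : |a| < 2 * |b|) : |a + b| < |b| := by
  rcases (abs_pos.1 ((abs_nonneg b).trans_lt hba)).lt_or_gt with ha | ha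
  · rw [abs_of_neg ha, abs_of_nonneg (nonneg_of_mul_nonpos_right hab ha)] at *
    exact abs_lt.2 ⟨by linarith, by linarith⟩
  · rw [abs_of_pos ha, abs_of_nonpos (nonpos_of_mul_nonpos_right hab ha)] at *
    exact abs_lt.2 ⟨by linarith, by linarith⟩

theorem neg_div_eq_abs_div_abs {a b : ℝ} (hab : a * b ≤ 0) : -b / a = |b| / |a| := by
  rcases eq_or_ne a 0 with rfl | ha
  · simp
  have hnonneg : 0 ≤ -b / a := by
    rw [show -b / a = -(a * b) / a ^ 2 by field_simp]
    exact div_nonneg (neg_nonneg.2 hab) (sq_nonneg a)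
  rw [← abs_of_nonneg hnonneg, abs_div, abs_neg]

def latticeSubgroup (g : SL2R) : AddSubgroup (Fin 2 → ℝ) where
  carrier := latticePts g
  add_mem' := by
    rintro _ _ ⟨m, rfl⟩ ⟨n, rfl⟩
    exact ⟨m + n, by rw [← Matrix.mulVec_add]; congr 1; ext i; simp⟩
  zero_mem' := ⟨0, by rw [← Matrix.mulVec_zero (g : Matrix (Fin 2) (Fin 2) ℝ)]; congr 1; ext i; simp⟩
  neg_mem' := by
    rintro _ ⟨m, rfl⟩
    exact ⟨-m, by rw [← Matrix.mulVec_neg]; congr 1; ext i; simp⟩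

theorem finite_latticePts_inter (g : SL2R) {K : Set (Fin 2 → ℝ)}
    (hK : Bornology.IsBounded K) : (latticePts g ∩ K).Finite := by
  obtain ⟨R, hR⟩ := isBounded_iff_forall_norm_le.1
    ((((g⁻¹ : SL2R) : Matrix (Fin 2) (Fin 2) ℝ)).mulVecLin.toContinuousLinearMap.lipschitz.isBounded_image hK)
  refine ((finite_Icc (-⌈R⌉ : Fin 2 → ℤ) ⌈R⌉).image
    fun m => (g : Matrix (Fin 2) (Fin 2) ℝ) *ᵥ fun i => (m i : ℝ)).subset ?_
  rintro _ ⟨⟨m, rfl⟩, hm⟩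
  have hmR := hR _ ⟨_, hm, rfl⟩
  rw [LinearMap.coe_toContinuousLinearMap', Matrix.mulVecLin_apply, Matrix.mulVec_mulVec,
    ← Matrix.SpecialLinearGroup.coe_mul, inv_mul_cancel, Matrix.SpecialLinearGroup.coe_one,
    Matrix.one_mulVec] at hmR
  have hm_le (i : Fin 2) : |m i| ≤ ⌈R⌉ := by
    have := (norm_le_pi_norm _ i).trans hmR
    rw [Real.norm_eq_abs, ← Int.cast_abs] at this
    exact Int.cast_le.1 (this.trans (Int.le_ceil R))
  exact ⟨m, ⟨fun i => neg_le_of_abs_le (hm_le i), fun i => le_of_abs_le (hm_le i)⟩, rfl⟩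

section MinimalVectors

variable {Λ : Set (Fin 2 → ℝ)} {r s t : Fin 2 → ℝ}

theorem IsMinimalVector.abs_one_lt_of_abs_zero_lt (hr : IsMinimalVector Λ r) (ht : t ∈ Λ)
    (ht0 : t ≠ 0) (h : |t 0| < |r 0|) : |r 1| < |t 1| := by
  by_contra! hle
  exact h.ne (hr.2.2 t ht ht0 h.le hle).1

theorem IsMinimalVector.abs_zero_lt_of_abs_one_lt (hr : IsMinimalVector Λ r) (ht : t ∈ Λ)
    (ht0 : t ≠ 0) (h : |t 1| < |r 1|) : |r 0| < |t 0| := by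
  by_contra! hle
  exact h.ne (hr.2.2 t ht ht0 hle h.le).2

theorem exists_isMinimalVector_le (hΛ : ∀ K, Bornology.IsBounded K → (Λ ∩ K).Finite)
    (ht : t ∈ Λ) (ht0 : t ≠ 0) : ∃ v, IsMinimalVector Λ v ∧ |v 0| ≤ |t 0| ∧ |v 1| ≤ |t 1| := by
  set S := {v | v ∈ Λ ∧ v ≠ 0 ∧ |v 0| ≤ |t 0| ∧ |v 1| ≤ |t 1|}
  have hbox : Bornology.IsBounded {v : Fin 2 → ℝ | |v 0| ≤ |t 0| ∧ |v 1| ≤ |t 1|} := by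
    refine isBounded_iff_forall_norm_le.2 ⟨|t 0| + |t 1|, fun v hv => ?_⟩
    refine (pi_norm_le_iff_of_nonneg (by positivity)).2 (Fin.forall_fin_two.2 ⟨?_, ?_⟩) <;>
      simp only [Real.norm_eq_abs] <;> linarith [hv.1, hv.2, abs_nonneg (t 0), abs_nonneg (t 1)]
  have hS : S.Finite := (hΛ _ hbox).subset fun v hv => ⟨hv.1, hv.2.2⟩
  obtain ⟨v, ⟨hvΛ, hv0, hvt₀, hvt₁⟩, hmin⟩ :=
    exists_min_image S (fun v => |v 0| + |v 1|) hS ⟨t, ht, ht0, le_rfl, le_rfl⟩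
  refine ⟨v, ⟨hvΛ, hv0, fun u hu hu0 huv₀ huv₁ => ?_⟩, hvt₀, hvt₁⟩
  have := hmin u ⟨hu, hu0, huv₀.trans hvt₀, huv₁.trans hvt₁⟩
  constructor <;> linarith

theorem ConsecutiveMinimalVectors.abs_zero_lt (h : ConsecutiveMinimalVectors Λ r s) :
    |s 0| < |r 0| :=
  h.2.1.abs_zero_lt_of_abs_one_lt h.1.1 h.1.2.1 h.2.2.1

theorem ConsecutiveMinimalVectors.abs_zero_le
    (hΛ : ∀ K, Bornology.IsBounded K → (Λ ∩ K).Finite)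
    (h : ConsecutiveMinimalVectors Λ r s) (ht : t ∈ Λ) (ht0 : t ≠ 0) (hts : |t 1| < |s 1|) :
    |r 0| ≤ |t 0| := by
  by_contra! htr
  obtain ⟨v, hv, hvt₀, hvt₁⟩ := exists_isMinimalVector_le hΛ ht ht0
  rcases le_or_gt |v 1| |r 1| with hvr | hrv
  · exact (h.1.abs_one_lt_of_abs_zero_lt hv.1 hv.2.1 (hvt₀.trans_lt htr)).not_ge hvr
  · exact h.2.2.2 ⟨v, hv, hrv, hvt₁.trans_lt hts⟩

end MinimalVectors

section LatticeMinimalVectors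

variable {Λ : AddSubgroup (Fin 2 → ℝ)} {r s : Fin 2 → ℝ}

theorem ConsecutiveMinimalVectors.mul_zero_nonpos
    (hΛ : ∀ K, Bornology.IsBounded K → ((Λ : Set (Fin 2 → ℝ)) ∩ K).Finite)
    (h : ConsecutiveMinimalVectors Λ r s) (h1 : 0 < r 1) (h2 : r 1 < s 1) :
    r 0 * s 0 ≤ 0 := by
  by_contra! hpos
  have hsub := sub_mem h.2.1.1 h.1.1
  have hsub1 : (s - r) 1 = s 1 - r 1 := rfl
  have hsub0 : s - r ≠ 0 := fun h0 => (sub_pos.2 h2).ne' (congrFun h0 1)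
  have := h.abs_zero_le hΛ hsub hsub0 (by
    rw [hsub1, abs_of_pos (by linarith), abs_of_pos (by linarith)]; linarith)
  exact this.not_gt (abs_sub_lt_abs_of_mul_pos hpos h.abs_zero_lt)

theorem ConsecutiveMinimalVectors.two_mul_abs_zero_le (h : ConsecutiveMinimalVectors Λ r s)
    (hr1 : r 1 = 0) (hrs : r 0 * s 0 ≤ 0) : 2 * |s 0| ≤ |r 0| := by
  by_contra! hlt
  have hadd1 : (r + s) 1 = s 1 := by simp [hr1]
  have hadd0 : r + s ≠ 0 := fun h0 =>
    (abs_pos.1 ((abs_nonneg _).trans_lt h.2.2.1)) (hadd1 ▸ congrFun h0 1)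
  have := h.2.1.abs_one_lt_of_abs_zero_lt (add_mem h.1.1 h.2.1.1) hadd0
    (abs_add_lt_abs_of_mul_nonpos hrs h.abs_zero_lt hlt)
  rw [hadd1] at this
  exact this.false

theorem ConsecutiveMinimalVectors.two_mul_le (h : ConsecutiveMinimalVectors Λ r s)
    (hs0 : s 0 = 0) (h1 : 0 ≤ r 1) (h2 : r 1 < s 1) : 2 * r 1 ≤ s 1 := by
  by_contra! hlt
  have hsub1 : (s - r) 1 = s 1 - r 1 := rfl
  have hsub0 : s - r ≠ 0 := fun h0 => (sub_pos.2 h2).ne' (congrFun h0 1)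
  have := h.1.abs_zero_lt_of_abs_one_lt (sub_mem h.2.1.1 h.1.1) hsub0 (by
    rw [hsub1, abs_of_pos (by linarith), abs_of_nonneg h1]; linarith)
  simp [hs0] at this

end LatticeMinimalVectors

def regionU : Set (ℝ × ℝ) :=
  Ioo 0 1 ×ˢ Ioo 0 1 ∪ Icc 0 (1 / 2) ×ˢ {0} ∪ {0} ×ˢ Icc 0 (1 / 2)

theorem mem_regionU {x y : ℝ} (hx : x ∈ Ico 0 1) (hy : y ∈ Ico 0 1)
    (hx_le : y = 0 → x ≤ 1 / 2) (hy_le : x = 0 → y ≤ 1 / 2) : (x, y) ∈ regionU := by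
  rcases hx.1.eq_or_lt with rfl | hx0
  · exact Or.inr ⟨rfl, hy.1, hy_le rfl⟩
  rcases hy.1.eq_or_lt with rfl | hy0
  · exact Or.inl (Or.inr ⟨⟨hx.1, hx_le rfl⟩, rfl⟩)
  · exact Or.inl (Or.inl ⟨⟨hx0, hx.2⟩, hy0, hy.2⟩)

/-- Let `(r, s)` be consecutive minimal vectors of a unimodular lattice with
`0 ≤ r₂ < s₂` and `r₁s₁ ≤ 0` whenever `r₂ = 0`. Then `r₁ ≠ 0` and, with
`x = −s₁/r₁` and `y = r₂/s₂`, the pair `(x,y)` lies in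
`U = (0,1)² ∪ ([0,1/2] × {0}) ∪ ({0} × [0,1/2])`. -/
theorem stmt14 (g : SL2R) (r s : Fin 2 → ℝ)
    (h : ConsecutiveMinimalVectors (latticePts g) r s)
    (h1 : 0 ≤ r 1) (h2 : r 1 < s 1) (h3 : r 1 = 0 → r 0 * s 0 ≤ 0) :
    r 0 ≠ 0 ∧
      ∀ x y : ℝ, x = -(s 0) / r 0 → y = r 1 / s 1 →
        (x, y) ∈ (Set.Ioo (0 : ℝ) 1 ×ˢ Set.Ioo (0 : ℝ) 1) ∪
          (Set.Icc (0 : ℝ) (1 / 2) ×ˢ ({0} : Set ℝ)) ∪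
          (({0} : Set ℝ) ×ˢ Set.Icc (0 : ℝ) (1 / 2)) := by
  replace h : ConsecutiveMinimalVectors (latticeSubgroup g) r s := h
  have hr0 : 0 < |r 0| := (abs_nonneg _).trans_lt h.abs_zero_lt
  have hs1 : 0 < s 1 := h1.trans_lt h2
  refine ⟨abs_pos.1 hr0, ?_⟩
  rintro x y rfl rfl
  have hrs : r 0 * s 0 ≤ 0 := h1.eq_or_lt.elim (fun h0 => h3 h0.symm)
    fun h1 => h.mul_zero_nonpos (fun _ => finite_latticePts_inter g) h1 h2
  rw [neg_div_eq_abs_div_abs hrs]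
  refine mem_regionU ⟨by positivity, (div_lt_one hr0).2 h.abs_zero_lt⟩
    ⟨div_nonneg h1 hs1.le, (div_lt_one hs1).2 h2⟩ (fun hy => ?_) (fun hx => ?_)
  · have := h.two_mul_abs_zero_le ((div_eq_zero_iff.1 hy).resolve_right hs1.ne') hrs
    rw [div_le_iff₀ hr0]
    linarith
  · have := h.two_mul_le (abs_eq_zero.1 ((div_eq_zero_iff.1 hx).resolve_right hr0.ne')) h1 h2
    rw [div_le_iff₀ hs1]
    linarith
end
end
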